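/- Let σ be a Borel measure on (0,∞) with ∫_{(0,∞)} dσ(t)/t < ∞, and let g(λ) = ∫_{(0,∞)} (λ + t)^{-1} dσ(t) for λ > 0. Then the function f(ξ) = g(ξ²) on ℝ is the Fourier transform of the function x ↦ ∫_{(0,∞)} (2√t)^{-1} exp(-√t |x|) dσ(t), which is even, integrable, and completely monotone on (0,∞). -/

import Mathlib

open MeasureTheory Set Filter Real
open scoped ENNReal NNReal

lemma cexp_norm (c : ℂ) (x : ℝ) : ‖Complex.exp (-c * x)‖ = Real.exp (-c.re * x) := by
  rw [Complex.norm_exp]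
  norm_num

lemma exp_tendsto {a : ℝ} (ha : 0 < a) :
    Tendsto (fun y : ℝ => Real.exp (-a * y)) atTop (nhds 0) := by
  have h1 : Tendsto (fun y : ℝ => a * y) atTop atTop :=
    Tendsto.const_mul_atTop ha tendsto_id
  have h2 := Real.tendsto_exp_neg_atTop_nhds_zero.comp h1
  convert h2 using 2 with y
  simp [Function.comp, neg_mul]

lemma aux_ioi {c : ℂ} (hc : 0 < c.re) :
    ∫ x in Ioi (0:ℝ), Complex.exp (-c * x) = 1 / c := by
  have hc0 : c ≠ 0 := fun h => by simp [h] at hc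
  have D : ∀ x : ℝ, HasDerivAt (fun y : ℝ => -c⁻¹ * Complex.exp (-c * y))
      (Complex.exp (-c * x)) x := by
    intro x
    have h2 : HasDerivAt (fun y : ℝ => Complex.exp (-c * y)) (-c * Complex.exp (-c * x)) x := by
      have h1 : HasDerivAt (fun y : ℝ => (-c) * (y:ℂ)) (-c) x := by
        simpa using ((hasDerivAt_id (x:ℂ)).const_mul (-c)).comp_ofReal
      simpa [mul_comm, Function.comp_def] using (Complex.hasDerivAt_exp (-c * x)).comp x h1
    exact (h2.const_mul (-c⁻¹)).congr_deriv (by rw [← mul_assoc, neg_mul_neg, inv_mul_cancel₀ hc0, one_mul])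
  have hint : IntegrableOn (fun x : ℝ => Complex.exp (-c * x)) (Ioi 0) := by
    refine Integrable.mono' (exp_neg_integrableOn_Ioi 0 hc) ?_ ?_
    · exact Continuous.aestronglyMeasurable (by continuity)
    · filter_upwards with x
      rw [cexp_norm]
  have ht : Tendsto (fun y : ℝ => -c⁻¹ * Complex.exp (-c * y)) atTop (nhds 0) := by
    refine squeeze_zero_norm (a := fun y => ‖c⁻¹‖ * Real.exp (-c.re * y)) (fun y => ?_) ?_
    · rw [norm_mul, norm_neg, cexp_norm]
    · simpa using (exp_tendsto hc).const_mul ‖c⁻¹‖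
  have := integral_Ioi_of_hasDerivAt_of_tendsto' (fun x _ => D x) hint ht
  rw [this]
  simp

lemma aux_iic {c : ℂ} (hc : 0 < c.re) :
    ∫ x in Iic (0:ℝ), Complex.exp (c * x) = 1 / c := by
  have h := integral_comp_neg_Ioi 0 (fun x : ℝ => Complex.exp (c * x))
  simp only [neg_zero] at h
  rw [← h, ← aux_ioi hc]
  refine setIntegral_congr_fun measurableSet_Ioi (fun x _ => ?_)
  push_cast
  ring_nf

lemma integrable_exp_abs {a : ℝ} (ha : 0 < a) :
    Integrable (fun x : ℝ => Real.exp (-a * |x|)) := by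
  have hIoi : IntegrableOn (fun x : ℝ => Real.exp (-a*|x|)) (Ioi 0) := by
    refine (exp_neg_integrableOn_Ioi 0 ha).congr_fun (fun x hx => ?_) measurableSet_Ioi
    rw [abs_of_pos hx]
  have hIic : IntegrableOn (fun x : ℝ => Real.exp (-a*|x|)) (Iic 0) := by
    rw [← Measure.map_neg_eq_self (volume : Measure ℝ)]
    have m : MeasurableEmbedding fun x : ℝ => -x := (Homeomorph.neg ℝ).measurableEmbedding
    rw [m.integrableOn_map_iff]
    simp_rw [Function.comp_def, abs_neg, neg_preimage, neg_Iic, neg_zero]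
    exact Iff.mpr integrableOn_Ici_iff_integrableOn_Ioi hIoi
  have h := hIic.union hIoi
  rwa [Iic_union_Ioi, integrableOn_univ] at h

lemma integrable_cfourier {a : ℝ} (ha : 0 < a) (ξ : ℝ) :
    Integrable (fun x : ℝ => (Real.exp (-a * |x|) : ℂ) * Complex.exp (-Complex.I * x * ξ)) := by
  refine (integrable_exp_abs ha).mono' (Continuous.aestronglyMeasurable (by continuity)) ?_
  filter_upwards with x
  rw [norm_mul, Complex.norm_exp, Complex.norm_real, Real.norm_eq_abs]
  have : (-Complex.I * x * ξ).re = 0 := by simp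
  rw [this, Real.exp_zero, mul_one, abs_of_nonneg (Real.exp_pos _).le]

lemma fourier_exp_abs {a : ℝ} (ha : 0 < a) (ξ : ℝ) :
    ∫ x : ℝ, (Real.exp (-a * |x|) : ℂ) * Complex.exp (-Complex.I * x * ξ)
      = ((2*a/(a^2+ξ^2) : ℝ) : ℂ) := by
  set c₁ : ℂ := (a:ℂ) + Complex.I * ξ with hc₁
  set c₂ : ℂ := (a:ℂ) - Complex.I * ξ with hc₂
  have h₁re : 0 < c₁.re := by simp [hc₁, ha]
  have h₂re : 0 < c₂.re := by simp [hc₂, ha]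
  have h₁0 : c₁ ≠ 0 := fun h => by simp [h] at h₁re
  have h₂0 : c₂ ≠ 0 := fun h => by simp [h] at h₂re
  have hint := integrable_cfourier ha ξ
  rw [← intervalIntegral.integral_Iic_add_Ioi (b := 0) hint.integrableOn hint.integrableOn]
  have e₁ : ∫ x in Ioi (0:ℝ), (Real.exp (-a * |x|) : ℂ) * Complex.exp (-Complex.I * x * ξ)
      = 1 / c₁ := by
    rw [← aux_ioi h₁re]
    refine setIntegral_congr_fun measurableSet_Ioi (fun x hx => ?_)
    rw [abs_of_pos hx, Complex.ofReal_exp, ← Complex.exp_add]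
    congr 1
    push_cast
    ring
  have e₂ : ∫ x in Iic (0:ℝ), (Real.exp (-a * |x|) : ℂ) * Complex.exp (-Complex.I * x * ξ)
      = 1 / c₂ := by
    rw [← aux_iic h₂re]
    refine setIntegral_congr_fun measurableSet_Iic (fun x hx => ?_)
    rw [abs_of_nonpos hx, Complex.ofReal_exp, ← Complex.exp_add]
    congr 1
    push_cast
    ring
  rw [e₁, e₂]
  have hd : (a:ℝ)^2 + ξ^2 ≠ 0 := by positivity
  have key : c₂ * c₁ = ((a^2+ξ^2 : ℝ) : ℂ) := by
    rw [hc₁, hc₂]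
    push_cast
    ring_nf
    rw [Complex.I_sq]
    ring
  push_cast
  rw [div_add_div _ _ h₂0 h₁0, key]
  rw [div_eq_div_iff (by exact_mod_cast hd) (by exact_mod_cast hd)]
  push_cast
  ring

lemma integral_exp_abs_eq {a : ℝ} (ha : 0 < a) :
    ∫ x : ℝ, Real.exp (-a * |x|) = 2 / a := by
  have h2 : ∫ x : ℝ, ((Real.exp (-a*|x|) : ℝ) : ℂ) = ((2*a/(a^2+(0:ℝ)^2) : ℝ) : ℂ) := by
    simpa using fourier_exp_abs ha 0
  have h4 : ∫ x : ℝ, ((Real.exp (-a*|x|) : ℝ) : ℂ) = ((∫ x : ℝ, Real.exp (-a*|x|) : ℝ) : ℂ) :=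
    integral_ofReal (𝕜 := ℂ) (μ := (volume : Measure ℝ)) (f := fun x => Real.exp (-a*|x|))
  rw [h4] at h2
  have h3 : ∫ x : ℝ, Real.exp (-a*|x|) = 2*a/(a^2+0^2) := by exact_mod_cast h2
  rw [h3]
  field_simp
  ring

lemma master_bound (n : ℕ) {c : ℝ} (hc : 0 < c) {t x : ℝ} (ht : 0 < t) (hx : c ≤ x) :
    |(-Real.sqrt t)^n * Real.exp (-Real.sqrt t * x) / (2*Real.sqrt t)|
      ≤ (((n+1).factorial : ℝ) / c^(n+1) / 2) * (1/t) := by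
  set u := Real.sqrt t with hu'
  have hu : 0 < u := Real.sqrt_pos.mpr ht
  have hut : u^2 = t := Real.sq_sqrt ht.le
  have habs : |(-u)^n * Real.exp (-u * x) / (2*u)| = u^n * Real.exp (-u*x)/(2*u) := by
    rw [abs_div, abs_mul, abs_pow, abs_neg, abs_of_pos hu, abs_of_pos (Real.exp_pos _),
      abs_of_pos (by linarith)]
  rw [habs]
  have hkey : u^(n+1) * Real.exp (-u*x) ≤ ((n+1).factorial : ℝ) / c^(n+1) := by
    have h1 : (c*u)^(n+1) / ((n+1).factorial : ℝ) ≤ Real.exp (c*u) :=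
      Real.pow_div_factorial_le_exp (x := c*u) (by positivity) (n+1)
    have h2 : Real.exp (-u*x) ≤ Real.exp (-(c*u)) := by
      apply Real.exp_le_exp.mpr
      nlinarith
    have h3 : Real.exp (-(c*u)) ≤ ((n+1).factorial : ℝ) / (c*u)^(n+1) := by
      rw [Real.exp_neg]
      have hpos : (0:ℝ) < (c*u)^(n+1) / ((n+1).factorial : ℝ) := by positivity
      calc (Real.exp (c*u))⁻¹ ≤ ((c*u)^(n+1) / ((n+1).factorial : ℝ))⁻¹ := by
            exact inv_anti₀ hpos h1
        _ = ((n+1).factorial : ℝ) / (c*u)^(n+1) := by rw [inv_div]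
    calc u^(n+1) * Real.exp (-u*x) ≤ u^(n+1) * (((n+1).factorial : ℝ) / (c*u)^(n+1)) := by
          apply mul_le_mul_of_nonneg_left (h2.trans h3) (by positivity)
      _ = ((n+1).factorial : ℝ) / c^(n+1) := by
          rw [mul_pow]
          field_simp
  have heq : u^n * Real.exp (-u*x) / (2*u) = u^(n+1) * Real.exp (-u*x) / (2*t) := by
    rw [← hut]
    field_simp
    ring
  rw [heq]
  rw [div_le_iff₀ (by positivity)]
  have : (((n+1).factorial : ℝ) / c^(n+1) / 2) * (1/t) * (2*t) = ((n+1).factorial : ℝ) / c^(n+1) := by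
    field_simp
  rw [this]
  exact hkey

noncomputable def HR (σ : Measure ℝ) (n : ℕ) (x : ℝ) : ℝ :=
  ∫ t, (-Real.sqrt t)^n * Real.exp (-Real.sqrt t * x) / (2*Real.sqrt t) ∂σ

noncomputable def HC (σ : Measure ℝ) (z : ℂ) : ℂ :=
  ∫ t, Complex.exp (-(Real.sqrt t : ℂ) * z) / (2*(Real.sqrt t : ℂ)) ∂σ

lemma ae_pos {σ : Measure ℝ} (hsupp : σ (Set.Ioi 0)ᶜ = 0) : ∀ᵐ t ∂σ, t ∈ Set.Ioi (0:ℝ) := by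
  rw [MeasureTheory.ae_iff]
  convert hsupp using 2
  ext a
  simp

lemma sf {σ : Measure ℝ} (hsupp : σ (Set.Ioi 0)ᶜ = 0)
    (hσ : ∫⁻ t, ENNReal.ofReal (1/t) ∂σ < ⊤) : SigmaFinite σ := by
  have hfin : ∀ n : ℕ, σ (Set.Ioc (0:ℝ) (n+1)) < ⊤ := by
    intro n
    have h1 : ∫⁻ t in Set.Ioc (0:ℝ) (n+1), ENNReal.ofReal (1/(n+1)) ∂σ
        ≤ ∫⁻ t in Set.Ioc (0:ℝ) (n+1), ENNReal.ofReal (1/t) ∂σ := by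
      refine setLIntegral_mono' measurableSet_Ioc (fun t ht => ?_)
      exact ENNReal.ofReal_le_ofReal (one_div_le_one_div_of_le ht.1 ht.2)
    rw [setLIntegral_const] at h1
    have h2 : ∫⁻ t in Set.Ioc (0:ℝ) (n+1), ENNReal.ofReal (1/t) ∂σ
        ≤ ∫⁻ t, ENNReal.ofReal (1/t) ∂σ := setLIntegral_le_lintegral _ _
    rcases eq_or_ne (σ (Set.Ioc (0:ℝ) (n+1))) ⊤ with he | he
    · exfalso
      rw [he, ENNReal.mul_top (ENNReal.ofReal_pos.mpr (by positivity)).ne'] at h1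
      exact absurd ((h1.trans h2).trans_lt hσ) (lt_irrefl _)
    · exact he.lt_top
  refine ⟨⟨⟨fun n => Set.Iic (n+1), fun _ => Set.mem_univ _, fun n => ?_, ?_⟩⟩⟩
  · have hsub : Set.Iic ((n:ℝ)+1) ⊆ Set.Ioc (0:ℝ) (n+1) ∪ (Set.Ioi 0)ᶜ := by
      intro x hx
      by_cases h : 0 < x
      · exact Or.inl ⟨h, hx⟩
      · exact Or.inr (by simpa using h)
    calc σ (Set.Iic ((n:ℝ)+1)) ≤ σ (Set.Ioc (0:ℝ) (n+1) ∪ (Set.Ioi 0)ᶜ) := measure_mono hsub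
      _ ≤ σ (Set.Ioc (0:ℝ) (n+1)) + σ (Set.Ioi 0)ᶜ := measure_union_le _ _
      _ < ⊤ := by rw [hsupp, add_zero]; exact hfin n
  · rw [Set.eq_univ_iff_forall]
    intro x
    obtain ⟨n, hn⟩ := exists_nat_ge x
    exact Set.mem_iUnion.mpr ⟨n, by simpa using hn.trans (by linarith)⟩

lemma int_inv {σ : Measure ℝ} (hsupp : σ (Set.Ioi 0)ᶜ = 0)
    (hσ : ∫⁻ t, ENNReal.ofReal (1/t) ∂σ < ⊤) : Integrable (fun t => 1/t) σ := by
  refine ⟨(measurable_const.div measurable_id).aestronglyMeasurable, ?_⟩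
  rw [hasFiniteIntegral_def]
  have : ∫⁻ t, ‖(1:ℝ)/t‖ₑ ∂σ = ∫⁻ t, ENNReal.ofReal (1/t) ∂σ := by
    refine lintegral_congr_ae ((ae_pos hsupp).mono (fun t ht => ?_))
    simp only []
    have ht' : (0:ℝ) < t := ht
    rw [Real.enorm_eq_ofReal (by positivity)]
  rwa [this]

lemma meas_master (n : ℕ) (x : ℝ) :
    Measurable (fun t : ℝ => (-Real.sqrt t)^n * Real.exp (-Real.sqrt t * x) / (2*Real.sqrt t)) := by
  have hs : Measurable fun t : ℝ => Real.sqrt t := Real.continuous_sqrt.measurable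
  exact ((hs.neg.pow_const n).mul (Real.measurable_exp.comp (hs.neg.mul_const x))).div
    ((measurable_const.mul hs))

lemma int_master {σ : Measure ℝ} (hsupp : σ (Set.Ioi 0)ᶜ = 0)
    (hσ : ∫⁻ t, ENNReal.ofReal (1/t) ∂σ < ⊤) (n : ℕ) {c : ℝ} (hc : 0 < c) {x : ℝ} (hx : c ≤ x) :
    Integrable (fun t => (-Real.sqrt t)^n * Real.exp (-Real.sqrt t * x) / (2*Real.sqrt t)) σ := by
  refine Integrable.mono' (((int_inv hsupp hσ).const_mul ((((n+1).factorial : ℝ) / c^(n+1) / 2)))) 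
    (meas_master n x).aestronglyMeasurable ?_
  filter_upwards [ae_pos hsupp] with t ht
  rw [Real.norm_eq_abs]
  exact master_bound n hc ht hx

lemma int_masterC {σ : Measure ℝ} (hsupp : σ (Set.Ioi 0)ᶜ = 0)
    (hσ : ∫⁻ t, ENNReal.ofReal (1/t) ∂σ < ⊤) (n : ℕ) {c : ℝ} (hc : 0 < c) {z : ℂ} (hz : c ≤ z.re) :
    Integrable (fun t => (-(Real.sqrt t:ℂ))^n * Complex.exp (-(Real.sqrt t : ℂ) * z) / (2*(Real.sqrt t:ℂ))) σ := by
  refine Integrable.mono' (((int_inv hsupp hσ).const_mul ((((n+1).factorial : ℝ) / c^(n+1) / 2))))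
    ?_ ?_
  · have hs : Measurable fun t : ℝ => ((Real.sqrt t : ℝ) : ℂ) :=
      Complex.measurable_ofReal.comp Real.continuous_sqrt.measurable
    exact (((hs.neg.pow_const n).mul (Complex.measurable_exp.comp (hs.neg.mul_const z))).div
      (measurable_const.mul hs)).aestronglyMeasurable
  · filter_upwards [ae_pos hsupp] with t ht
    have hnorm : ‖(-(Real.sqrt t:ℂ))^n * Complex.exp (-(Real.sqrt t : ℂ) * z) / (2*(Real.sqrt t:ℂ))‖
        = |(-Real.sqrt t)^n * Real.exp (-Real.sqrt t * z.re) / (2*Real.sqrt t)| := by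
      rw [norm_div, norm_mul, norm_pow, norm_neg, abs_div, abs_mul, abs_pow, abs_neg]
      have h1 : ‖Complex.exp (-(Real.sqrt t : ℂ) * z)‖ = Real.exp (-Real.sqrt t * z.re) := by
        rw [Complex.norm_exp]
        congr 1
        simp
      rw [h1]
      have h2 : ‖((Real.sqrt t : ℝ) : ℂ)‖ = |Real.sqrt t| := by rw [Complex.norm_real, Real.norm_eq_abs]
      rw [h2, abs_of_pos (Real.exp_pos _)]
      congr 1
      rw [norm_mul, h2]
      simp [abs_mul]
    rw [hnorm]
    exact master_bound n hc ht hz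

lemma normC (n : ℕ) (t : ℝ) (z : ℂ) :
    ‖(-(Real.sqrt t:ℂ))^n * Complex.exp (-(Real.sqrt t : ℂ) * z) / (2*(Real.sqrt t:ℂ))‖
      = |(-Real.sqrt t)^n * Real.exp (-Real.sqrt t * z.re) / (2*Real.sqrt t)| := by
  rw [norm_div, norm_mul, norm_pow, norm_neg, abs_div, abs_mul, abs_pow, abs_neg]
  have h1 : ‖Complex.exp (-(Real.sqrt t : ℂ) * z)‖ = Real.exp (-Real.sqrt t * z.re) := by
    rw [Complex.norm_exp]
    congr 1
    simp
  have h2 : ‖((Real.sqrt t : ℝ) : ℂ)‖ = |Real.sqrt t| := by rw [Complex.norm_real, Real.norm_eq_abs]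
  rw [h1, h2, abs_of_pos (Real.exp_pos _)]
  congr 1
  rw [norm_mul, h2]
  simp [abs_mul]

lemma hasDerivHR {σ : Measure ℝ} (hsupp : σ (Set.Ioi 0)ᶜ = 0)
    (hσ : ∫⁻ t, ENNReal.ofReal (1/t) ∂σ < ⊤) (n : ℕ) {x : ℝ} (hx : 0 < x) :
    HasDerivAt (HR σ n) (HR σ (n+1) x) x := by
  have h2 : 0 < x/2 := by positivity
  have key := hasDerivAt_integral_of_dominated_loc_of_deriv_le (μ := σ) (x₀ := x) (s := Metric.ball x (x/2))
    (F := fun y t => (-Real.sqrt t)^n * Real.exp (-Real.sqrt t * y) / (2*Real.sqrt t))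
    (F' := fun y t => (-Real.sqrt t)^(n+1) * Real.exp (-Real.sqrt t * y) / (2*Real.sqrt t))
    (bound := fun t => ((((n+1)+1).factorial : ℝ) / (x/2)^((n+1)+1) / 2) * (1/t))
    (Metric.ball_mem_nhds x h2)
    (Eventually.of_forall fun y => (meas_master n y).aestronglyMeasurable)
    (int_master hsupp hσ n hx le_rfl)
    (meas_master (n+1) x).aestronglyMeasurable
    ?_ ((int_inv hsupp hσ).const_mul _) ?_
  · exact key.2
  · filter_upwards [ae_pos hsupp] with t ht
    intro y hy
    have hy' : x/2 ≤ y := by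
      rw [Metric.mem_ball, Real.dist_eq, abs_lt] at hy
      linarith [hy.1]
    rw [Real.norm_eq_abs]
    exact master_bound (n+1) h2 ht hy'
  · filter_upwards [ae_pos hsupp] with t _
    intro y _
    have hd1 : HasDerivAt (fun y : ℝ => -Real.sqrt t * y) (-Real.sqrt t) y := by
      simpa using (hasDerivAt_id y).const_mul (-Real.sqrt t)
    have hd : HasDerivAt (fun y : ℝ => Real.exp (-Real.sqrt t * y))
        (Real.exp (-Real.sqrt t * y) * -Real.sqrt t) y :=
      (Real.hasDerivAt_exp (-Real.sqrt t * y)).comp y hd1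
    have := (hd.const_mul ((-Real.sqrt t)^n)).div_const (2*Real.sqrt t)
    exact this.congr_deriv (by ring)

lemma diffHC {σ : Measure ℝ} (hsupp : σ (Set.Ioi 0)ᶜ = 0)
    (hσ : ∫⁻ t, ENNReal.ofReal (1/t) ∂σ < ⊤) {z₀ : ℂ} (hz : 0 < z₀.re) :
    DifferentiableAt ℂ (HC σ) z₀ := by
  have h2 : 0 < z₀.re/2 := by positivity
  have key := hasDerivAt_integral_of_dominated_loc_of_deriv_le (μ := σ) (x₀ := z₀) (s := Metric.ball z₀ (z₀.re/2))
    (F := fun w t => Complex.exp (-(Real.sqrt t : ℂ) * w) / (2*(Real.sqrt t:ℂ)))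
    (F' := fun w t => -(Real.sqrt t:ℂ) * Complex.exp (-(Real.sqrt t : ℂ) * w) / (2*(Real.sqrt t:ℂ)))
    (bound := fun t => ((((1:ℕ)+1).factorial : ℝ) / (z₀.re/2)^((1:ℕ)+1) / 2) * (1/t))
    (Metric.ball_mem_nhds z₀ h2) ?_ ?_ ?_ ?_ ((int_inv hsupp hσ).const_mul _) ?_
  · exact key.2.differentiableAt
  · refine Eventually.of_forall fun w => ?_
    have hs : Measurable fun t : ℝ => ((Real.sqrt t : ℝ) : ℂ) :=
      Complex.measurable_ofReal.comp Real.continuous_sqrt.measurable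
    exact ((Complex.measurable_exp.comp (hs.neg.mul_const w)).div
      (measurable_const.mul hs)).aestronglyMeasurable
  · have h0 := int_masterC hsupp hσ 0 (c := z₀.re) hz (z := z₀) le_rfl
    simpa using h0
  · have h1 := int_masterC hsupp hσ 1 (c := z₀.re) hz (z := z₀) le_rfl
    have := h1.aestronglyMeasurable
    simpa using this
  · filter_upwards [ae_pos hsupp] with t ht
    intro w hw
    have hw' : z₀.re/2 ≤ w.re := by
      have h3 := Complex.abs_re_le_norm (w - z₀)
      rw [Metric.mem_ball, Complex.dist_eq] at hw
      rw [Complex.sub_re] at h3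
      have h4 : |w.re - z₀.re| < z₀.re/2 := lt_of_le_of_lt h3 hw
      rw [abs_lt] at h4
      linarith [h4.1]
    have hnorm := normC 1 t w
    simp only [pow_one] at hnorm
    rw [hnorm]
    have := master_bound 1 h2 ht hw'
    rwa [pow_one] at this
  · filter_upwards [ae_pos hsupp] with t _
    intro w _
    have hd1 : HasDerivAt (fun w : ℂ => -(Real.sqrt t:ℂ) * w) (-(Real.sqrt t:ℂ)) w := by
      simpa using (hasDerivAt_id w).const_mul (-(Real.sqrt t:ℂ))
    have hd := (Complex.hasDerivAt_exp (-(Real.sqrt t:ℂ) * w)).comp w hd1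
    have hd2 := hd.div_const (2*(Real.sqrt t:ℂ))
    exact hd2.congr_deriv (by ring)

lemma prod_int {σ : Measure ℝ} (hsupp : σ (Set.Ioi 0)ᶜ = 0)
    (hσ : ∫⁻ t, ENNReal.ofReal (1/t) ∂σ < ⊤) :
    Integrable (Function.uncurry fun (x t : ℝ) =>
      Real.exp (-Real.sqrt t * |x|) / (2*Real.sqrt t)) (volume.prod σ) := by
  haveI := sf hsupp hσ
  have hs : Measurable fun p : ℝ×ℝ => Real.sqrt p.2 :=
    Real.continuous_sqrt.measurable.comp measurable_snd
  have ha : Measurable fun p : ℝ×ℝ => |p.1| :=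
    _root_.continuous_abs.measurable.comp measurable_fst
  have hmeas : Measurable (Function.uncurry fun (x t : ℝ) =>
      Real.exp (-Real.sqrt t * |x|) / (2*Real.sqrt t)) :=
    (Real.measurable_exp.comp (hs.neg.mul ha)).div (measurable_const.mul hs)
  refine ⟨hmeas.aestronglyMeasurable, ?_⟩
  rw [hasFiniteIntegral_def]
  rw [lintegral_prod_symm _ hmeas.enorm.aemeasurable]
  have inner_bound : ∀ t : ℝ, ∫⁻ x, (‖Real.exp (-Real.sqrt t * |x|) / (2*Real.sqrt t)‖₊ : ℝ≥0∞) ∂volume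
      ≤ ENNReal.ofReal (1/t) := by
    intro t
    by_cases ht : 0 < t
    · have hst : 0 < Real.sqrt t := Real.sqrt_pos.mpr ht
      have heq : ∀ x : ℝ, (‖Real.exp (-Real.sqrt t * |x|) / (2*Real.sqrt t)‖₊ : ℝ≥0∞)
          = ENNReal.ofReal (Real.exp (-Real.sqrt t * |x|) / (2*Real.sqrt t)) := fun x =>
        Real.enorm_eq_ofReal (by positivity)
      rw [lintegral_congr heq]
      have hint : Integrable (fun x : ℝ => Real.exp (-Real.sqrt t * |x|) / (2*Real.sqrt t)) :=
        (integrable_exp_abs hst).div_const _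
      rw [← ofReal_integral_eq_lintegral_ofReal hint
        (Eventually.of_forall (fun x => by positivity))]
      have hval : ∫ x : ℝ, Real.exp (-Real.sqrt t * |x|) / (2*Real.sqrt t)
          = 1/t := by
        rw [integral_div, integral_exp_abs_eq hst]
        rw [div_div]
        rw [show Real.sqrt t * (2 * Real.sqrt t) = 2 * t by
          rw [← Real.sq_sqrt ht.le, Real.sqrt_sq (Real.sqrt_nonneg t)]; ring]
        rw [div_eq_div_iff (by positivity) ht.ne']
        ring
      rw [hval]
    · push_neg at ht
      have hst : Real.sqrt t = 0 := Real.sqrt_eq_zero'.mpr (by linarith)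
      have : ∀ x : ℝ, (‖Real.exp (-Real.sqrt t * |x|) / (2*Real.sqrt t)‖₊ : ℝ≥0∞) = 0 := by
        intro x
        simp [hst]
      rw [lintegral_congr this]
      simp
  calc ∫⁻ t, (∫⁻ x, (‖Function.uncurry (fun (x t : ℝ) =>
          Real.exp (-Real.sqrt t * |x|) / (2*Real.sqrt t)) (x, t)‖₊ : ℝ≥0∞) ∂volume) ∂σ
      ≤ ∫⁻ t, ENNReal.ofReal (1/t) ∂σ := lintegral_mono inner_bound
    _ < ⊤ := hσ

theorem stieltjes_fourier (σ : Measure ℝ) (hsupp : σ (Set.Ioi 0)ᶜ = 0)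
    (hσ : ∫⁻ t, ENNReal.ofReal (1/t) ∂σ < ⊤)
    (h g : ℝ → ℝ)
    (hh : ∀ x, h x = ∫ t, Real.exp (-Real.sqrt t * |x|) / (2*Real.sqrt t) ∂σ)
    (hg : ∀ l, g l = ∫ t, (l+t)⁻¹ ∂σ) :
    (∀ x, h (-x) = h x) ∧ Integrable h ∧
    (∀ ξ : ℝ, (g (ξ^2) : ℂ) = ∫ x : ℝ, (h x : ℂ) * Complex.exp (-(Complex.I) * x * ξ)) ∧
    ContDiffOn ℝ (⊤ : ℕ∞) h (Set.Ioi 0) ∧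
    (∀ (n : ℕ), ∀ x ∈ Set.Ioi (0:ℝ),
      0 ≤ (-1)^n * iteratedDerivWithin n h (Set.Ioi 0) x) := by
  haveI := sf hsupp hσ
  have hae := ae_pos hsupp
  have even : ∀ x, h (-x) = h x := fun x => by rw [hh, hh]; simp only [abs_neg]
  have hfun : h = fun x => ∫ t, Real.exp (-Real.sqrt t * |x|) / (2*Real.sqrt t) ∂σ := funext hh
  have hint : Integrable h := by
    rw [hfun]; exact (prod_int hsupp hσ).integral_prod_left
  have fourier : ∀ ξ : ℝ, (g (ξ^2) : ℂ)
      = ∫ x : ℝ, (h x : ℂ) * Complex.exp (-(Complex.I) * x * ξ) := by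
    intro ξ
    have hcont : Continuous fun p : ℝ×ℝ => Complex.exp (-(Complex.I) * p.1 * ξ) := by
      continuity
    have hprodC : Integrable (Function.uncurry fun (x t : ℝ) =>
        (Real.exp (-Real.sqrt t * |x|) / (2*Real.sqrt t)) • Complex.exp (-(Complex.I) * x * ξ))
        (volume.prod σ) := by
      refine (prod_int hsupp hσ).mono'
        ((prod_int hsupp hσ).aestronglyMeasurable.smul hcont.aestronglyMeasurable) ?_
      filter_upwards with p
      obtain ⟨x, t⟩ := p
      simp only [Function.uncurry_apply_pair]
      rw [norm_smul]
      have h1 : ‖Complex.exp (-(Complex.I) * x * ξ)‖ = 1 := by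
        rw [Complex.norm_exp]
        have : (-(Complex.I) * x * ξ).re = 0 := by simp
        rw [this, Real.exp_zero]
      rw [h1, mul_one, Real.norm_eq_abs, abs_of_nonneg (by positivity)]
    have step1 : ∀ x : ℝ, (h x : ℂ) * Complex.exp (-(Complex.I) * x * ξ)
        = ∫ t, (Real.exp (-Real.sqrt t * |x|) / (2*Real.sqrt t))
            • Complex.exp (-(Complex.I) * x * ξ) ∂σ := by
      intro x
      rw [integral_smul_const, hh x, Complex.real_smul]
    have inner : ∀ t ∈ Set.Ioi (0:ℝ),
        (∫ x : ℝ, (Real.exp (-Real.sqrt t * |x|) / (2*Real.sqrt t))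
          • Complex.exp (-(Complex.I) * x * ξ)) = (((ξ^2+t)⁻¹ : ℝ) : ℂ) := by
      intro t ht
      have ht' : (0:ℝ) < t := ht
      have ha : 0 < Real.sqrt t := Real.sqrt_pos.mpr ht'
      have e1 : (fun x : ℝ => (Real.exp (-Real.sqrt t * |x|) / (2*Real.sqrt t))
            • Complex.exp (-(Complex.I) * x * ξ))
          = fun x : ℝ => ((Real.exp (-Real.sqrt t * |x|) : ℝ) : ℂ)
              * Complex.exp (-(Complex.I) * x * ξ) / ((2*Real.sqrt t : ℝ) : ℂ) := by
        funext x
        rw [Complex.real_smul]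
        push_cast
        ring
      rw [e1, integral_div, fourier_exp_abs ha ξ, ← Complex.ofReal_div]
      norm_cast
      rw [div_div]
      rw [show (Real.sqrt t)^2 + ξ^2 = ξ^2 + t by rw [Real.sq_sqrt ht'.le]; ring]
      rw [show (ξ^2+t) * (2*Real.sqrt t) = (2*Real.sqrt t) * (ξ^2+t) by ring]
      rw [← div_div]
      rw [div_self (by positivity), one_div]
    calc (g (ξ^2) : ℂ) = ((∫ t, (ξ^2+t)⁻¹ ∂σ : ℝ) : ℂ) := by rw [hg]
      _ = ∫ t, (((ξ^2+t)⁻¹ : ℝ) : ℂ) ∂σ :=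
          (integral_ofReal (𝕜 := ℂ) (μ := σ) (f := fun t => (ξ^2+t)⁻¹)).symm
      _ = ∫ t, (∫ x : ℝ, (Real.exp (-Real.sqrt t * |x|) / (2*Real.sqrt t))
            • Complex.exp (-(Complex.I) * x * ξ)) ∂σ := by
          refine (integral_congr_ae (hae.mono fun t ht => ?_)).symm
          exact inner t ht
      _ = ∫ x : ℝ, (∫ t, (Real.exp (-Real.sqrt t * |x|) / (2*Real.sqrt t))
            • Complex.exp (-(Complex.I) * x * ξ) ∂σ) := (integral_integral_swap hprodC).symm
      _ = ∫ x : ℝ, (h x : ℂ) * Complex.exp (-(Complex.I) * x * ξ) := by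
          refine integral_congr_ae (Eventually.of_forall fun x => (step1 x).symm)
  have hEq0 : Set.EqOn h (HR σ 0) (Set.Ioi 0) := by
    intro x hx
    rw [hh x, HR]
    simp only [pow_zero, one_mul, abs_of_pos (Set.mem_Ioi.mp hx)]
  have hEqn : ∀ n, Set.EqOn (iteratedDerivWithin n h (Set.Ioi 0)) (HR σ n) (Set.Ioi 0) := by
    intro n
    induction n with
    | zero => intro x hx; rw [iteratedDerivWithin_zero]; exact hEq0 hx
    | succ n ih =>
      intro x hx
      rw [iteratedDerivWithin_succ]
      rw [derivWithin_congr ih (ih hx)]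
      exact ((hasDerivHR hsupp hσ n (Set.mem_Ioi.mp hx)).hasDerivWithinAt).derivWithin
        (isOpen_Ioi.uniqueDiffWithinAt hx)
  have hC_eq : Set.EqOn (fun x : ℝ => (HC σ (x:ℂ)).re) h (Set.Ioi 0) := by
    intro x hx
    have hHCx : HC σ (x:ℂ) = ((HR σ 0 x : ℝ) : ℂ) := by
      rw [HC, HR]
      simp only [pow_zero, one_mul]
      have e2 : ∀ t : ℝ, Complex.exp (-(Real.sqrt t:ℂ)*(x:ℂ))/(2*(Real.sqrt t:ℂ))
          = ((Real.exp (-Real.sqrt t*x)/(2*Real.sqrt t) : ℝ) : ℂ) := by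
        intro t
        rw [show -(Real.sqrt t:ℂ)*(x:ℂ) = ((-Real.sqrt t*x : ℝ):ℂ) by push_cast; ring,
          ← Complex.ofReal_exp]
        push_cast
        ring
      simp only [e2]
      exact integral_ofReal (𝕜 := ℂ) (μ := σ)
        (f := fun t => Real.exp (-Real.sqrt t*x)/(2*Real.sqrt t))
    show (HC σ (x:ℂ)).re = h x
    rw [hHCx, Complex.ofReal_re]
    exact (hEq0 hx).symm
  have contdiff : ContDiffOn ℝ (⊤ : ℕ∞) h (Set.Ioi 0) := by
    have hopen : IsOpen {z : ℂ | 0 < z.re} := isOpen_lt continuous_const Complex.continuous_re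
    have hA : AnalyticOnNhd ℂ (HC σ) {z : ℂ | 0 < z.re} :=
      DifferentiableOn.analyticOnNhd
        (fun z hz => (diffHC hsupp hσ hz).differentiableWithinAt) hopen
    have hA2 : AnalyticOnNhd ℝ (fun x : ℝ => (HC σ (x:ℂ)).re) (Set.Ioi 0) := by
      have hcomp : AnalyticOnNhd ℝ (fun x : ℝ => HC σ (x:ℂ)) (Set.Ioi 0) := by
        refine hA.restrictScalars.comp (Complex.ofRealCLM.analyticOnNhd (Set.Ioi 0)) ?_
        intro x hx
        simpa using Set.mem_Ioi.mp hx
      exact (Complex.reCLM.analyticOnNhd (Set.univ : Set ℂ)).comp hcomp (Set.mapsTo_univ _ _)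
    exact (hA2.congr isOpen_Ioi hC_eq).contDiffOn isOpen_Ioi.uniqueDiffOn
  refine ⟨even, hint, fourier, contdiff, ?_⟩
  intro n x hx
  rw [hEqn n hx, HR, ← integral_const_mul]
  refine integral_nonneg fun t => ?_
  have e3 : (-1:ℝ)^n * ((-Real.sqrt t)^n * Real.exp (-Real.sqrt t * x)/(2*Real.sqrt t))
      = (Real.sqrt t)^n * Real.exp (-Real.sqrt t*x)/(2*Real.sqrt t) := by
    calc (-1:ℝ)^n * ((-Real.sqrt t)^n * Real.exp (-Real.sqrt t * x)/(2*Real.sqrt t))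
        = ((-1:ℝ)^n * (-Real.sqrt t)^n) * Real.exp (-Real.sqrt t * x)/(2*Real.sqrt t) := by ring
      _ = ((-1 * -Real.sqrt t)^n) * Real.exp (-Real.sqrt t * x)/(2*Real.sqrt t) := by
          rw [mul_pow]
      _ = (Real.sqrt t)^n * Real.exp (-Real.sqrt t*x)/(2*Real.sqrt t) := by
          rw [neg_one_mul, neg_neg]
  rw [e3]
  positivity
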